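/- arXiv:2210.02747 — 4 statements merged into one kernel-verified Lean document; each statement's English description precedes it below -/
import Mathlib

section
/- Let d ≥ 1. For each x₁ ∈ ℝᵈ, let p(·,·|x₁) : [0,1] × ℝᵈ → ℝ_{>0} be a conditional probability density path and u(·,·|x₁) : [0,1] × ℝᵈ → ℝᵈ a time-dependent vector field such that for each fixed x₁ the pair satisfies the continuity equation ∂_t p_t(x|x₁) + div_x(p_t(x|x₁) u_t(x|x₁)) = 0 for all t ∈ [0,1] and x ∈ ℝᵈ. Let q be a probability density on ℝᵈ. Define the marginal path p_t(x) = ∫ p_t(x|x₁) q(x₁) dx₁ and assume p_t(x) > 0 for all t, x. Define the marginal vector field u_t(x) = ∫ u_t(x|x₁) p_t(x|x₁) q(x₁) / p_t(x) dx₁. Assume the regularity needed to differentiate under the integral sign and to exchange divergence with integration (e.g., the integrands and their relevant t- and x-derivatives are dominated by integrable functions). Then p_t and u_t satisfy the continuity equation: ∂_t p_t(x) + div_x(p_t(x) u_t(x)) = 0 for all t ∈ [0,1] and x ∈ ℝᵈ. -/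
open MeasureTheory Set

noncomputable section

/-- The (spatial) divergence of a vector field on `ℝᵈ`: `div v x = ∑ i ∂vⁱ/∂xⁱ (x)`. -/
def divergence {d : ℕ} (v : EuclideanSpace ℝ (Fin d) → EuclideanSpace ℝ (Fin d))
    (x : EuclideanSpace ℝ (Fin d)) : ℝ :=
  ∑ i, fderiv ℝ v x (EuclideanSpace.single i 1) i

lemma divergence_const_smul {d : ℕ} (c : ℝ)
    (v : EuclideanSpace ℝ (Fin d) → EuclideanSpace ℝ (Fin d)) (x : EuclideanSpace ℝ (Fin d)) :
    divergence (fun y => c • v y) x = c * divergence v x := by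
  simp only [divergence, Finset.mul_sum]
  change ∑ i, fderiv ℝ (c • v) x _ i = _
  simp [fderiv_const_smul_field]

theorem marginal_vf_generates_marginal_path_general
    {d : ℕ}
    (pcond : ℝ → EuclideanSpace ℝ (Fin d) → EuclideanSpace ℝ (Fin d) → ℝ)
    (ucond : ℝ → EuclideanSpace ℝ (Fin d) → EuclideanSpace ℝ (Fin d) →
      EuclideanSpace ℝ (Fin d))
    (q : EuclideanSpace ℝ (Fin d) → ℝ)
    (pmarg : ℝ → EuclideanSpace ℝ (Fin d) → ℝ)
    (umarg : ℝ → EuclideanSpace ℝ (Fin d) → EuclideanSpace ℝ (Fin d))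
    -- each conditional pair satisfies the continuity equation
    (hcond : ∀ x₁, ∀ t ∈ Icc (0:ℝ) 1, ∀ x,
      deriv (fun s => pcond s x x₁) t
        + divergence (fun y => pcond t y x₁ • ucond t y x₁) x = 0)
    -- regularity: differentiation in `t` under the integral sign
    (h_deriv_swap : ∀ x, ∀ t ∈ Icc (0:ℝ) 1,
      deriv (fun s => pmarg s x) t = ∫ x₁, deriv (fun s => pcond s x x₁) t * q x₁)
    -- regularity: the divergence commutes with the integral over `x₁`
    (h_div_swap : ∀ x, ∀ t ∈ Icc (0:ℝ) 1,
      divergence (fun y => pmarg t y • umarg t y) x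
        = ∫ x₁, divergence (fun y => (pcond t y x₁ * q x₁) • ucond t y x₁) x) :
    ∀ t ∈ Icc (0:ℝ) 1, ∀ x,
      deriv (fun s => pmarg s x) t
        + divergence (fun y => pmarg t y • umarg t y) x = 0 := by
  intro t ht x
  have hdiv_weighted : ∀ x₁,
      divergence (fun y => (pcond t y x₁ * q x₁) • ucond t y x₁) x
        = -(deriv (fun s => pcond s x x₁) t * q x₁) := by
    intro x₁
    simp_rw [mul_comm (pcond t _ x₁), ← smul_smul]
    rw [divergence_const_smul, eq_neg_of_add_eq_zero_right (hcond x₁ t ht x)]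
    ring
  rw [h_deriv_swap x t ht, h_div_swap x t ht, integral_congr_ae (.of_forall hdiv_weighted),
    integral_neg, add_neg_cancel]

/-- **Marginal vector field generates the marginal probability path.**
If for each `x₁` the conditional pair `(p_t(·|x₁), u_t(·|x₁))` satisfies the continuity
equation, then the marginal path `p_t(x) = ∫ p_t(x|x₁) q(x₁) dx₁` and the marginal field
`u_t(x) = ∫ u_t(x|x₁) p_t(x|x₁) q(x₁) / p_t(x) dx₁` also satisfy the continuity equation. -/
theorem marginal_vf_generates_marginal_path
    {d : ℕ} (hd : 1 ≤ d)
    (pcond : ℝ → EuclideanSpace ℝ (Fin d) → EuclideanSpace ℝ (Fin d) → ℝ)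
    (ucond : ℝ → EuclideanSpace ℝ (Fin d) → EuclideanSpace ℝ (Fin d) →
      EuclideanSpace ℝ (Fin d))
    (q : EuclideanSpace ℝ (Fin d) → ℝ)
    (pmarg : ℝ → EuclideanSpace ℝ (Fin d) → ℝ)
    (umarg : ℝ → EuclideanSpace ℝ (Fin d) → EuclideanSpace ℝ (Fin d))
    -- `p(·,·|x₁)` is a positive conditional probability density path
    (hpcond_pos : ∀ t x x₁, 0 < pcond t x x₁)
    (hpcond_int : ∀ x₁, ∀ t ∈ Icc (0:ℝ) 1, ∫ x, pcond t x x₁ = 1)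
    -- `q` is a probability density on `ℝᵈ`
    (hq_nonneg : ∀ x₁, 0 ≤ q x₁)
    (hq_int : ∫ x₁, q x₁ = 1)
    -- each conditional pair satisfies the continuity equation
    (hcond : ∀ x₁, ∀ t ∈ Icc (0:ℝ) 1, ∀ x,
      deriv (fun s => pcond s x x₁) t
        + divergence (fun y => pcond t y x₁ • ucond t y x₁) x = 0)
    -- the marginal probability path, assumed positive everywhere
    (hpmarg : ∀ t x, pmarg t x = ∫ x₁, pcond t x x₁ * q x₁)
    (hpmarg_pos : ∀ t x, 0 < pmarg t x)
    -- the marginal vector field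
    (humarg : ∀ t x, umarg t x
      = (pmarg t x)⁻¹ • ∫ x₁, (pcond t x x₁ * q x₁) • ucond t x x₁)
    -- regularity: differentiation in `t` under the integral sign
    (h_deriv_swap : ∀ x, ∀ t ∈ Icc (0:ℝ) 1,
      deriv (fun s => pmarg s x) t = ∫ x₁, deriv (fun s => pcond s x x₁) t * q x₁)
    -- regularity: the divergence commutes with the integral over `x₁`
    (h_div_swap : ∀ x, ∀ t ∈ Icc (0:ℝ) 1,
      divergence (fun y => pmarg t y • umarg t y) x
        = ∫ x₁, divergence (fun y => (pcond t y x₁ * q x₁) • ucond t y x₁) x) :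
    ∀ t ∈ Icc (0:ℝ) 1, ∀ x,
      deriv (fun s => pmarg s x) t
        + divergence (fun y => pmarg t y • umarg t y) x = 0 :=
  marginal_vf_generates_marginal_path_general pcond ucond q pmarg umarg hcond h_deriv_swap
    h_div_swap

end
end

section
/- Let d ≥ 1, let q be a probability density on ℝᵈ, for each x₁ let p_t(·|x₁) be a probability density on ℝᵈ and u_t(·|x₁) : ℝᵈ → ℝᵈ a bounded measurable vector field. Let p_t(x) = ∫ p_t(x|x₁) q(x₁) dx₁ and assume p_t(x) > 0 for all x; define u_t(x) = ∫ u_t(x|x₁) p_t(x|x₁) q(x₁)/p_t(x) dx₁. Then for any bounded measurable v_t : ℝᵈ → ℝᵈ, assuming the integrability needed for Fubini's theorem, ∫ ⟨v_t(x), u_t(x)⟩ p_t(x) dx = ∫∫ ⟨v_t(x), u_t(x|x₁)⟩ p_t(x|x₁) q(x₁) dx₁ dx. -/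
open MeasureTheory Set
open scoped RealInnerProductSpace

noncomputable section

/-- **Cross term identity for the marginal vector field:**
`∫ ⟨v(x), u(x)⟩ p(x) dx = ∫∫ ⟨v(x), u(x|x₁)⟩ p(x|x₁) q(x₁) dx₁ dx`, where
`u(x) = ∫ u(x|x₁) p(x|x₁) q(x₁) / p(x) dx₁` is the marginal vector field. -/
theorem cross_term_marginal_eq_mixed
    {d : ℕ} (hd : 1 ≤ d)
    (q : EuclideanSpace ℝ (Fin d) → ℝ)
    (pcond : EuclideanSpace ℝ (Fin d) → EuclideanSpace ℝ (Fin d) → ℝ)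
    (pmarg : EuclideanSpace ℝ (Fin d) → ℝ)
    (ucond : EuclideanSpace ℝ (Fin d) → EuclideanSpace ℝ (Fin d) →
      EuclideanSpace ℝ (Fin d))
    (umarg : EuclideanSpace ℝ (Fin d) → EuclideanSpace ℝ (Fin d))
    (v : EuclideanSpace ℝ (Fin d) → EuclideanSpace ℝ (Fin d))
    -- `q` is a probability density
    (hq_nonneg : ∀ x₁, 0 ≤ q x₁) (hq_int : ∫ x₁, q x₁ = 1) (hq_meas : Measurable q)
    -- for each `x₁`, `p(·|x₁)` is a probability density
    (hpcond_nonneg : ∀ x x₁, 0 ≤ pcond x x₁)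
    (hpcond_int : ∀ x₁, ∫ x, pcond x x₁ = 1)
    (hpcond_meas : Measurable (Function.uncurry pcond))
    -- `u(·|x₁)` are bounded measurable conditional vector fields
    (hucond_meas : Measurable (Function.uncurry ucond))
    (hucond_bdd : ∃ M, ∀ x x₁, ‖ucond x x₁‖ ≤ M)
    -- the marginal density, positive everywhere
    (hpmarg : ∀ x, pmarg x = ∫ x₁, pcond x x₁ * q x₁)
    (hpmarg_pos : ∀ x, 0 < pmarg x)
    -- the marginal vector field
    (humarg : ∀ x, umarg x = (pmarg x)⁻¹ • ∫ x₁, (pcond x x₁ * q x₁) • ucond x x₁)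
    -- `v` is a bounded measurable vector field
    (hv_meas : Measurable v) (hv_bdd : ∃ M, ∀ x, ‖v x‖ ≤ M)
    -- integrability needed for Fubini's theorem
    (hInt : Integrable
      (fun z : EuclideanSpace ℝ (Fin d) × EuclideanSpace ℝ (Fin d) =>
        ⟪v z.1, ucond z.1 z.2⟫ * (pcond z.1 z.2 * q z.2)) (volume.prod volume))
    (hInt' : ∀ x, Integrable (fun x₁ => (pcond x x₁ * q x₁) • ucond x x₁)) :
    ∫ x, ⟪v x, umarg x⟫ * pmarg x
      = ∫ x, ∫ x₁, ⟪v x, ucond x x₁⟫ * (pcond x x₁ * q x₁) := by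
  have key : ∀ x, ⟪v x, umarg x⟫ * pmarg x
      = ∫ x₁, ⟪v x, ucond x x₁⟫ * (pcond x x₁ * q x₁) := by
    intro x
    rw [humarg, inner_smul_right, ← integral_inner (hInt' x)]
    have hI : (∫ x₁, ⟪v x, (pcond x x₁ * q x₁) • ucond x x₁⟫)
        = ∫ x₁, ⟪v x, ucond x x₁⟫ * (pcond x x₁ * q x₁) := by
      congr 1
      funext x₁
      rw [real_inner_smul_right]
      ring
    rw [hI, mul_comm ((pmarg x)⁻¹), mul_assoc,
      inv_mul_cancel₀ (hpmarg_pos x).ne', mul_one]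
  simp only [key]

end
end

section
/- Let d ≥ 1, let p : [0,1] × ℝᵈ → ℝ_{>0} be a differentiable probability density path and v : [0,1] × ℝᵈ → ℝᵈ a differentiable time-dependent vector field satisfying the continuity equation ∂_t p_t(x) + div_x(p_t(x) v_t(x)) = 0 for all t and x. Let φ : [0,1] × ℝᵈ → ℝᵈ solve the flow ODE (d/dt) φ_t(x) = v_t(φ_t(x)) with φ₀(x) = x. Then for every x ∈ ℝᵈ and t ∈ [0,1], (d/dt) log p_t(φ_t(x)) = −div_x v_t(φ_t(x)) (the instantaneous change of variables formula). -/
/-! Along the flow, `d/dt p_t(φ_t x) = ∂_t p + ∇p · v`, while the product rule turns the continuity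
equation into `∂_t p + p div v + ∇p · v = 0`. Subtracting, the derivative of `p` along the flow is
`-p div v`, and dividing by `p > 0` gives the derivative of `log p`. -/

open Set

noncomputable section

theorem EuclideanSpace.continuousLinearMap_apply_eq_sum {ι F : Type*} [Fintype ι] [DecidableEq ι]
    [NormedAddCommGroup F] [NormedSpace ℝ F] (L : EuclideanSpace ℝ ι →L[ℝ] F)
    (w : EuclideanSpace ℝ ι) : L w = ∑ i, w i • L (EuclideanSpace.single i 1) := by
  conv_lhs => rw [← (EuclideanSpace.basisFun ι ℝ).sum_repr w]
  simp [map_sum, map_smul]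

theorem divergence_smul {d : ℕ} {f : EuclideanSpace ℝ (Fin d) → ℝ}
    {v : EuclideanSpace ℝ (Fin d) → EuclideanSpace ℝ (Fin d)} {x : EuclideanSpace ℝ (Fin d)}
    (hf : DifferentiableAt ℝ f x) (hv : DifferentiableAt ℝ v x) :
    divergence (fun y => f y • v y) x = f x * divergence v x + fderiv ℝ f x (v x) := by
  rw [EuclideanSpace.continuousLinearMap_apply_eq_sum (fderiv ℝ f x), divergence, divergence,
    fderiv_fun_smul hf hv, Finset.mul_sum, ← Finset.sum_add_distrib]
  refine Finset.sum_congr rfl fun i _ => ?_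
  simp [mul_comm]

theorem hasDerivAt_along_curve {E F : Type*} [NormedAddCommGroup E] [NormedSpace ℝ E]
    [NormedAddCommGroup F] [NormedSpace ℝ F] {f : ℝ → E → F} {γ : ℝ → E} {γ' : E} {t : ℝ}
    (hf : DifferentiableAt ℝ (Function.uncurry f) (t, γ t)) (hγ : HasDerivAt γ γ' t) :
    HasDerivAt (fun s => f s (γ s))
      (deriv (fun s => f s (γ t)) t + fderiv ℝ (f t) (γ t) γ') t := by
  set D := fderiv ℝ (Function.uncurry f) (t, γ t)
  have htime : HasDerivAt (fun s => f s (γ t)) (D (1, 0)) t :=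
    hf.hasFDerivAt.comp_hasDerivAt (l := Function.uncurry f) t
      ((hasDerivAt_id t).prodMk (hasDerivAt_const t (γ t)))
  have hspace : HasFDerivAt (f t) (D.comp (.inr ℝ ℝ E)) (γ t) :=
    hf.hasFDerivAt.comp (γ t) (hasFDerivAt_prodMk_right t (γ t))
  have hsplit : D (1, 0) + D.comp (.inr ℝ ℝ E) γ' = D (1, γ') := by simp [← map_add]
  rw [htime.deriv, hspace.fderiv, hsplit]
  exact hf.hasFDerivAt.comp_hasDerivAt (l := Function.uncurry f) t ((hasDerivAt_id t).prodMk hγ)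

theorem DifferentiableAt.of_uncurry {E F : Type*} [NormedAddCommGroup E] [NormedSpace ℝ E]
    [NormedAddCommGroup F] [NormedSpace ℝ F] {f : ℝ → E → F} {t : ℝ} {x : E}
    (hf : DifferentiableAt ℝ (Function.uncurry f) (t, x)) : DifferentiableAt ℝ (f t) x :=
  hf.comp x (hasFDerivAt_prodMk_right t x).differentiableAt

theorem instantaneous_change_of_variables_general
    {d : ℕ}
    (p : ℝ → EuclideanSpace ℝ (Fin d) → ℝ)
    (v : ℝ → EuclideanSpace ℝ (Fin d) → EuclideanSpace ℝ (Fin d))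
    (φ : ℝ → EuclideanSpace ℝ (Fin d) → EuclideanSpace ℝ (Fin d))
    -- `p` is a differentiable, everywhere-positive probability density path
    (hp_pos : ∀ t ∈ Icc (0:ℝ) 1, ∀ x, 0 < p t x)
    (hp_diff : Differentiable ℝ (Function.uncurry p))
    -- `v` is a differentiable time-dependent vector field
    (hv_diff : Differentiable ℝ (Function.uncurry v))
    -- the continuity equation
    (hcont : ∀ t ∈ Icc (0:ℝ) 1, ∀ x,
      deriv (fun s => p s x) t + divergence (fun y => p t y • v t y) x = 0)
    -- `φ` is the flow of `v` starting at the identity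
    (hφ : ∀ t ∈ Icc (0:ℝ) 1, ∀ x, HasDerivAt (fun s => φ s x) (v t (φ t x)) t) :
    ∀ x, ∀ t ∈ Icc (0:ℝ) 1,
      HasDerivAt (fun s => Real.log (p s (φ s x))) (-divergence (v t) (φ t x)) t := by
  intro x t ht
  have hpos : p t (φ t x) ≠ 0 := (hp_pos t ht _).ne'
  have hcont_φ := hcont t ht (φ t x)
  rw [divergence_smul (hp_diff _).of_uncurry (hv_diff _).of_uncurry] at hcont_φ
  convert (hasDerivAt_along_curve (hp_diff _) (hφ t ht x)).log hpos using 1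
  field_simp
  linarith

/-- **Instantaneous change of variables:** if `(p, v)` satisfies the continuity equation
and `φ` is the flow of `v` (with `φ₀ = id`), then along the flow the log-density satisfies
`(d/dt) log p_t(φ_t(x)) = −div v_t(φ_t(x))`. -/
theorem instantaneous_change_of_variables
    {d : ℕ} (hd : 1 ≤ d)
    (p : ℝ → EuclideanSpace ℝ (Fin d) → ℝ)
    (v : ℝ → EuclideanSpace ℝ (Fin d) → EuclideanSpace ℝ (Fin d))
    (φ : ℝ → EuclideanSpace ℝ (Fin d) → EuclideanSpace ℝ (Fin d))
    -- `p` is a differentiable, everywhere-positive probability density path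
    (hp_pos : ∀ t ∈ Icc (0:ℝ) 1, ∀ x, 0 < p t x)
    (hp_int : ∀ t ∈ Icc (0:ℝ) 1, ∫ x, p t x = 1)
    (hp_diff : Differentiable ℝ (Function.uncurry p))
    -- `v` is a differentiable time-dependent vector field
    (hv_diff : Differentiable ℝ (Function.uncurry v))
    -- the continuity equation
    (hcont : ∀ t ∈ Icc (0:ℝ) 1, ∀ x,
      deriv (fun s => p s x) t + divergence (fun y => p t y • v t y) x = 0)
    -- `φ` is the flow of `v` starting at the identity
    (hφ0 : ∀ x, φ 0 x = x)
    (hφ : ∀ t ∈ Icc (0:ℝ) 1, ∀ x, HasDerivAt (fun s => φ s x) (v t (φ t x)) t) :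
    ∀ x, ∀ t ∈ Icc (0:ℝ) 1,
      HasDerivAt (fun s => Real.log (p s (φ s x))) (-divergence (v t) (φ t x)) t :=
  instantaneous_change_of_variables_general p v φ hp_pos hp_diff hv_diff hcont hφ

end
end

section
/- Let d ≥ 1, fix y₀ ∈ ℝᵈ, let β : [0,1] → ℝ be continuous and positive, T(t) = ∫₀ᵗ β(s) ds with T(s) > 0 for s ∈ (0,1], and define w_t(y|y₀) = (T'(t)/2)((y − e^{−T(t)/2} y₀)/(1 − e^{−T(t)}) − y). Then the time-reversed field w̃_t(y|y₀) = −w_{1−t}(y|y₀) satisfies, for all t ∈ [0,1) and y ∈ ℝᵈ, w̃_t(y|y₀) = −(T'(1−t)/2) · (e^{−T(1−t)} y − e^{−T(1−t)/2} y₀)/(1 − e^{−T(1−t)}); in particular, the time-reversed Fokker–Planck/probability-flow vector field of the VP diffusion coincides with the conditional vector field u_t(y|y₀) = (α'_{1−t}/(1 − α_{1−t}²))(α_{1−t} y − y₀) obtained from the Gaussian-path construction with α_t = e^{−T(t)/2}. -/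
open Set

/-
With `E = e^{-T}` and `a = e^{-T/2}` (so `a² = E`), the field `w` is `(T'/2)((y - a y₀)/(1 - E) - y)`,
and putting the bracket over the common denominator gives `(E y - a y₀)/(1 - E)`; this is the first
identity. For the second, `α' = a · (-T'/2)` by the chain rule and `E y - a y₀ = a (a y - y₀)`.
Positivity of `T(1 - t)` keeps the denominator `1 - e^{-T(1-t)}` away from zero.
-/

section

variable {V : Type*} [AddCommGroup V] [Module ℝ V]

theorem inv_one_sub_smul_sub_sub_self {c : ℝ} (hc : c ≠ 1) (a : ℝ) (y y₀ : V) :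
    (1 - c)⁻¹ • (y - a • y₀) - y = (1 - c)⁻¹ • (c • y - a • y₀) := by
  have h : (1 : ℝ) - c ≠ 0 := sub_ne_zero.2 hc.symm
  match_scalars <;> field_simp
  ring

theorem neg_half_smul_inv_one_sub_sq_smul {a : ℝ} (ha : a ^ 2 ≠ 1) (k : ℝ) (y y₀ : V) :
    -(k / 2) • ((1 - a ^ 2)⁻¹ • (a ^ 2 • y - a • y₀))
      = (a * (-k / 2) / (1 - a ^ 2)) • (a • y - y₀) := by
  have h : (1 : ℝ) - a ^ 2 ≠ 0 := sub_ne_zero.2 ha.symm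
  match_scalars <;> field_simp

end

theorem VP_time_reversed_field_eq_conditional_vf_general
    {d : ℕ} (y₀ : EuclideanSpace ℝ (Fin d))
    (T T' : ℝ → ℝ)
    (hT' : ∀ s ∈ Icc (0:ℝ) 1, HasDerivAt T (T' s) s)
    (hT_pos : ∀ s ∈ Ioc (0:ℝ) 1, 0 < T s)
    (w : ℝ → EuclideanSpace ℝ (Fin d) → EuclideanSpace ℝ (Fin d))
    (hw : ∀ t y, w t y
      = (T' t / 2) •
          ((1 - Real.exp (-T t))⁻¹ • (y - Real.exp (-T t / 2) • y₀) - y))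
    (α α' : ℝ → ℝ)
    (hα : ∀ t, α t = Real.exp (-T t / 2))
    (hα' : ∀ s ∈ Icc (0:ℝ) 1, HasDerivAt α (α' s) s) :
    ∀ t ∈ Ico (0:ℝ) 1, ∀ y : EuclideanSpace ℝ (Fin d),
      -w (1 - t) y
          = -(T' (1 - t) / 2) •
              ((1 - Real.exp (-T (1 - t)))⁻¹ •
                (Real.exp (-T (1 - t)) • y - Real.exp (-T (1 - t) / 2) • y₀)) ∧
      -w (1 - t) y
          = (α' (1 - t) / (1 - α (1 - t) ^ 2)) • (α (1 - t) • y - y₀) := by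
  rintro t ⟨ht0, ht1⟩ y
  have hs : 1 - t ∈ Ioc (0:ℝ) 1 := ⟨by linarith, by linarith⟩
  have hexp_ne_one : Real.exp (-T (1 - t)) ≠ 1 :=
    (Real.exp_lt_one_iff.2 (neg_neg_of_pos (hT_pos _ hs))).ne
  have hfirst : -w (1 - t) y = -(T' (1 - t) / 2) •
      ((1 - Real.exp (-T (1 - t)))⁻¹ •
        (Real.exp (-T (1 - t)) • y - Real.exp (-T (1 - t) / 2) • y₀)) := by
    rw [hw, inv_one_sub_smul_sub_sub_self hexp_ne_one, neg_smul]
  refine ⟨hfirst, ?_⟩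
  have hα_sq : α (1 - t) ^ 2 = Real.exp (-T (1 - t)) := by
    rw [hα, ← Real.exp_nat_mul]; ring_nf
  have hα'_eq : α' (1 - t) = α (1 - t) * (-T' (1 - t) / 2) := by
    refine (hα' _ (Ioc_subset_Icc_self hs)).unique ?_
    rw [funext hα]
    exact ((hT' _ (Ioc_subset_Icc_self hs)).neg.div_const 2).exp
  rw [hfirst, hα'_eq, ← hα_sq, ← hα]
  exact neg_half_smul_inv_one_sub_sq_smul (hα_sq ▸ hexp_ne_one) _ _ _

/-- **Time-reversed VP probability-flow field coincides with the Gaussian-path conditional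
vector field:** with `w_t(y|y₀) = (T'(t)/2)((y − e^{−T(t)/2} y₀)/(1 − e^{−T(t)}) − y)`
(the Fokker–Planck field of the VP diffusion), the time-reversed field
`w̃_t(y|y₀) = −w_{1−t}(y|y₀)` satisfies, for all `t ∈ [0,1)` and `y`,
`w̃_t(y|y₀) = −(T'(1−t)/2)(e^{−T(1−t)} y − e^{−T(1−t)/2} y₀)/(1 − e^{−T(1−t)})`, and in
particular equals `u_t(y|y₀) = (α'_{1−t}/(1 − α_{1−t}²))(α_{1−t} y − y₀)` with
`α_t = e^{−T(t)/2}`. -/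
theorem VP_time_reversed_field_eq_conditional_vf
    {d : ℕ} (hd : 1 ≤ d) (y₀ : EuclideanSpace ℝ (Fin d))
    (β : ℝ → ℝ)
    (hβ_cont : ContinuousOn β (Icc (0:ℝ) 1))
    (hβ_pos : ∀ s ∈ Icc (0:ℝ) 1, 0 < β s)
    (T T' : ℝ → ℝ)
    (hT : ∀ t, T t = ∫ s in (0:ℝ)..t, β s)
    (hT' : ∀ s ∈ Icc (0:ℝ) 1, HasDerivAt T (T' s) s)
    (hT_pos : ∀ s ∈ Ioc (0:ℝ) 1, 0 < T s)
    (w : ℝ → EuclideanSpace ℝ (Fin d) → EuclideanSpace ℝ (Fin d))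
    (hw : ∀ t y, w t y
      = (T' t / 2) •
          ((1 - Real.exp (-T t))⁻¹ • (y - Real.exp (-T t / 2) • y₀) - y))
    (α α' : ℝ → ℝ)
    (hα : ∀ t, α t = Real.exp (-T t / 2))
    (hα' : ∀ s ∈ Icc (0:ℝ) 1, HasDerivAt α (α' s) s) :
    ∀ t ∈ Ico (0:ℝ) 1, ∀ y : EuclideanSpace ℝ (Fin d),
      -w (1 - t) y
          = -(T' (1 - t) / 2) •
              ((1 - Real.exp (-T (1 - t)))⁻¹ •
                (Real.exp (-T (1 - t)) • y - Real.exp (-T (1 - t) / 2) • y₀)) ∧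
      -w (1 - t) y
          = (α' (1 - t) / (1 - α (1 - t) ^ 2)) • (α (1 - t) • y - y₀) :=
  VP_time_reversed_field_eq_conditional_vf_general y₀ T T' hT' hT_pos w hw α α' hα hα'
end
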